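/- A discrete-time counting process (N_t) with jump amounts J_0, J_1, ... satisfies the M^{(a)}-UOSP if and only if it is an a-mixed geometric process; i.e., P{J_0=j_0,...,J_t=j_t | N_t=k} = Π_h a(j_h)/C^{(a)}_{t+1,k} for all t,k and (j_0,...,j_t) ∈ A_{t+1,k} holds if and only if there exist functions R_t : ℕ → [0,∞) with P{J_0=j_0,...,J_t=j_t} = R_t(Σ_h j_h)·Π_{h=0}^t a(j_h) for all t. -/

import Mathlib

open MeasureTheory

/-!
The event `{N_t = k}` is the disjoint union of the cylinders `{J_0 = j_0, …, J_t = j_t}` over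
`j ∈ A_{t+1,k}`. If every cylinder has probability `R_t(k) ∏ a(j_h)`, summing gives
`P{N_t = k} = R_t(k) C^{(a)}_{t+1,k}`, which is the UOSP after dividing. Conversely the UOSP
itself exhibits `R_t(k) = P{N_t = k} / C^{(a)}_{t+1,k}`.
-/

/-- The set `A_{n,r}` of `n`-tuples of nonnegative integers with each entry `≤ r`
and sum equal to `r`. -/
def Afin (n r : ℕ) : Finset (Fin n → ℕ) :=
  (Fintype.piFinset fun _ => Finset.range (r + 1)).filter fun x => ∑ j, x j = r

/-- The normalization constant `C^{(a)}_{n,r} = ∑_{ξ ∈ A_{n,r}} ∏_j a(ξ_j)`. -/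
noncomputable def Cconst (a : ℕ → ℝ) (n r : ℕ) : ℝ :=
  ∑ x ∈ Afin n r, ∏ j, a (x j)

open Finset

lemma mem_Afin {n r : ℕ} {x : Fin n → ℕ} : x ∈ Afin n r ↔ ∑ j, x j = r := by
  simp only [Afin, mem_filter, Fintype.mem_piFinset, mem_range, and_iff_right_iff_imp]
  rintro rfl i
  exact Nat.lt_succ_of_le (single_le_sum (fun _ _ => Nat.zero_le _) (mem_univ i))

lemma Cconst_pos {a : ℕ → ℝ} (ha : ∀ x, 0 < a x) (n r : ℕ) : 0 < Cconst a (n + 1) r := by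
  refine sum_pos (fun x _ => prod_pos fun j _ => ha _) ⟨Pi.single 0 r, ?_⟩
  simp [mem_Afin]

section

variable {Ω : Type*} [MeasurableSpace Ω] (μ : Measure Ω) [IsFiniteMeasure μ] {J : ℕ → Ω → ℕ}

lemma measureReal_sum_range_eq_sum_Afin (hJ : ∀ h, Measurable (J h)) (n k : ℕ) :
    μ.real {ω | ∑ h ∈ range n, J h ω = k}
      = ∑ j ∈ Afin n k, μ.real {ω | ∀ h : Fin n, J h ω = j h} := by
  have hpath : Measurable fun ω (h : Fin n) => J h ω := measurable_pi_lambda _ fun h => hJ h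
  have hlevel : {ω | ∑ h ∈ range n, J h ω = k} = (fun ω (h : Fin n) => J h ω) ⁻¹' ↑(Afin n k) := by
    ext ω
    simp [mem_Afin, Fin.sum_univ_eq_sum_range (fun h => J h ω)]
  have hcylinder (j : Fin n → ℕ) :
      {ω | ∀ h : Fin n, J h ω = j h} = (fun ω (h : Fin n) => J h ω) ⁻¹' {j} := by
    ext ω
    simp [funext_iff]
  simp only [hlevel, hcylinder]
  exact (sum_measureReal_preimage_singleton _ fun j _ => hpath (measurableSet_singleton j)).symm

lemma measureReal_sum_range_eq_mul_Cconst (hJ : ∀ h, Measurable (J h)) {a : ℕ → ℝ}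
    {r : ℕ → ℝ} {n : ℕ}
    (hr : ∀ j : Fin n → ℕ, μ.real {ω | ∀ h : Fin n, J h ω = j h} = r (∑ h, j h) * ∏ h, a (j h))
    (k : ℕ) : μ.real {ω | ∑ h ∈ range n, J h ω = k} = r k * Cconst a n k := by
  rw [measureReal_sum_range_eq_sum_Afin μ hJ, Cconst, mul_sum]
  exact sum_congr rfl fun j hj => by rw [hr, mem_Afin.1 hj]

end

/-- A discrete-time counting process `N_t = J_0 + ⋯ + J_t` satisfies the
`M^{(a)}`-UOSP (i.e. `P{J_0 = j_0, …, J_t = j_t | N_t = k} = ∏_h a(j_h)/C^{(a)}_{t+1,k}`,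
stated in multiplied-out form) if and only if it is an `a`-mixed geometric process
(i.e. there are nonnegative functions `R_t` with
`P{J_0 = j_0, …, J_t = j_t} = R_t(∑_h j_h) · ∏_h a(j_h)`). -/
theorem Ma_UOSP_iff_a_mixed_geometric
    {Ω : Type*} [MeasurableSpace Ω] (μ : Measure Ω) [IsProbabilityMeasure μ]
    (J : ℕ → Ω → ℕ) (hJ : ∀ h, Measurable (J h))
    (a : ℕ → ℝ) (ha : ∀ x, 0 < a x) :
    (∀ (t k : ℕ) (j : Fin (t + 1) → ℕ), (∑ h, j h) = k →
        (μ {ω | ∀ h : Fin (t + 1), J h ω = j h}).toReal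
          = (∏ h, a (j h)) / Cconst a (t + 1) k
              * (μ {ω | ∑ h ∈ Finset.range (t + 1), J h ω = k}).toReal)
      ↔ ∃ R : ℕ → ℕ → ℝ, (∀ t k, 0 ≤ R t k) ∧
          ∀ (t : ℕ) (j : Fin (t + 1) → ℕ),
            (μ {ω | ∀ h : Fin (t + 1), J h ω = j h}).toReal
              = R t (∑ h, j h) * ∏ h, a (j h) := by
  simp only [← measureReal_def]
  constructor
  · intro huosp
    refine ⟨fun t k => μ.real {ω | ∑ h ∈ range (t + 1), J h ω = k} / Cconst a (t + 1) k,
      fun t k => div_nonneg measureReal_nonneg (Cconst_pos ha t k).le, fun t j => ?_⟩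
    rw [huosp t _ j rfl]
    ring
  · rintro ⟨R, -, hR⟩ t _ j rfl
    rw [measureReal_sum_range_eq_mul_Cconst μ hJ (hR t), hR]
    field_simp [(Cconst_pos ha t _).ne']
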